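/- arXiv:2004.11714 — 3 statements merged into one kernel-verified Lean document; each statement's English description precedes it below -/
import Mathlib

section
/- Let X be a finite set, and let p_data and p_LM be probability distributions on X with p_LM(x) > 0 whenever p_data(x) > 0. For a function E : X → ℝ, define the objective J(E) = ∑_{x} p_data(x) · log(1/(1 + exp(E(x)))) + ∑_{x} p_LM(x) · log(1/(1 + exp(-E(x)))). Then J(E) is maximized when exp(-E(x)) = p_data(x)/p_LM(x) for all x in the support of p_LM, i.e., the pointwise maximizer of the integrand is E*(x) = log(p_LM(x)/p_data(x)). -/
/-!
Pointwise, with `u = 1 / (1 + exp (-t))` the classifier's probability of "data", the integrand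
is `a * log (1 - u) + b * log u`, and Gibbs' inequality for the two-point distributions
`(a, b) / (a + b)` and `(1 - u, u)` shows it is maximal at `u = b / (a + b)`, i.e. at
`exp (-t) = a / b`. Where `p_LM` vanishes so does `p_data`, and the integrand is zero.
-/

open Real Finset

namespace Real

lemma one_div_one_add_exp_neg (t : ℝ) : 1 / (1 + exp (-t)) = sigmoid t := by
  rw [one_div, sigmoid_def]

lemma one_div_one_add_exp (t : ℝ) : 1 / (1 + exp t) = 1 - sigmoid t := by
  rw [← sigmoid_neg, ← one_div_one_add_exp_neg, neg_neg]

lemma sigmoid_eq_div_of_exp_neg_eq {a b t : ℝ} (ha : 0 < a) (hb : 0 < b)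
    (ht : exp (-t) = a / b) : sigmoid t = b / (a + b) := by
  rw [sigmoid_def, ht]
  field_simp
  ring

/-- The tangent-line bound `log x ≤ x - 1` at `x = s * u / a`. -/
lemma mul_log_le_mul_log_div_add {a s u : ℝ} (ha : 0 < a) (hs : 0 < s) (hu : 0 < u) :
    a * log u ≤ a * log (a / s) + (s * u - a) := by
  have hlog : log u - log (a / s) ≤ s * u / a - 1 := by
    rw [← log_div hu.ne' (by positivity)]
    convert log_le_sub_one_of_pos (by positivity : 0 < u / (a / s)) using 2
    field_simp
  have := mul_le_mul_of_nonneg_left hlog ha.le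
  rw [mul_sub, mul_sub, mul_div_cancel₀ _ ha.ne'] at this
  linarith

lemma mul_log_one_sub_add_mul_log_le {a b u : ℝ} (ha : 0 < a) (hb : 0 < b)
    (hu0 : 0 < u) (hu1 : u < 1) :
    a * log (1 - u) + b * log u ≤ a * log (a / (a + b)) + b * log (b / (a + b)) := by
  have hs : 0 < a + b := add_pos ha hb
  have h₁ := mul_log_le_mul_log_div_add ha hs (sub_pos.mpr hu1)
  have h₂ := mul_log_le_mul_log_div_add hb hs hu0
  linarith

end Real

lemma nce_integrand_le {a b t tstar : ℝ} (ha : 0 < a) (hb : 0 < b)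
    (htstar : exp (-tstar) = a / b) :
    a * log (1 / (1 + exp t)) + b * log (1 / (1 + exp (-t)))
      ≤ a * log (1 / (1 + exp tstar)) + b * log (1 / (1 + exp (-tstar))) := by
  have hσ : sigmoid tstar = b / (a + b) := sigmoid_eq_div_of_exp_neg_eq ha hb htstar
  have hσ' : 1 - sigmoid tstar = a / (a + b) := by
    rw [hσ]
    field_simp
    ring
  rw [one_div_one_add_exp_neg, one_div_one_add_exp_neg, one_div_one_add_exp,
    one_div_one_add_exp, hσ', hσ]
  exact mul_log_one_sub_add_mul_log_le ha hb (sigmoid_pos t) (sigmoid_lt_one t)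

lemma nce_integrand_le_of_support {a b t tstar : ℝ} (ha : 0 ≤ a) (hb : 0 ≤ b)
    (hab : 0 < a → 0 < b) (htstar : 0 < b → exp (-tstar) = a / b) :
    a * log (1 / (1 + exp t)) + b * log (1 / (1 + exp (-t)))
      ≤ a * log (1 / (1 + exp tstar)) + b * log (1 / (1 + exp (-tstar))) := by
  rcases hb.eq_or_lt with rfl | hb
  · obtain rfl : a = 0 := le_antisymm (not_lt.mp (hab.mt (lt_irrefl 0))) ha
    simp
  · have ha : 0 < a := by
      have h := exp_pos (-tstar)
      rwa [htstar hb, div_pos_iff_of_pos_right hb] at h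
    exact nce_integrand_le ha hb (htstar hb)

theorem stmt_0_general {X : Type*} [Fintype X]
    (pdata pLM : X → ℝ)
    (hd0 : ∀ x, 0 ≤ pdata x) (hl0 : ∀ x, 0 ≤ pLM x)
    (hsupp : ∀ x, 0 < pdata x → 0 < pLM x)
    (J : (X → ℝ) → ℝ)
    (hJ : J = fun E => (∑ x, pdata x * Real.log (1 / (1 + Real.exp (E x))))
        + ∑ x, pLM x * Real.log (1 / (1 + Real.exp (-(E x)))))
    (Estar : X → ℝ)
    (hEstar : ∀ x, 0 < pLM x → Real.exp (-(Estar x)) = pdata x / pLM x) :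
    ∀ E : X → ℝ, J E ≤ J Estar := by
  intro E
  subst hJ
  simp only [← sum_add_distrib]
  exact sum_le_sum fun x _ =>
    nce_integrand_le_of_support (hd0 x) (hl0 x) (hsupp x) (hEstar x)

/-- NCE optimality: the objective
`J(E) = ∑ p_data(x)·log(1/(1+e^{E x})) + ∑ p_LM(x)·log(1/(1+e^{-E x}))`
is maximized when `exp(-E(x)) = p_data(x)/p_LM(x)` on the support of `p_LM`. -/
theorem stmt_0 {X : Type*} [Fintype X]
    (pdata pLM : X → ℝ)
    (hd0 : ∀ x, 0 ≤ pdata x) (hl0 : ∀ x, 0 ≤ pLM x)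
    (hd1 : ∑ x, pdata x = 1) (hl1 : ∑ x, pLM x = 1)
    (hsupp : ∀ x, 0 < pdata x → 0 < pLM x)
    (J : (X → ℝ) → ℝ)
    (hJ : J = fun E => (∑ x, pdata x * Real.log (1 / (1 + Real.exp (E x))))
        + ∑ x, pLM x * Real.log (1 / (1 + Real.exp (-(E x)))))
    (Estar : X → ℝ)
    (hEstar : ∀ x, 0 < pLM x → Real.exp (-(Estar x)) = pdata x / pLM x) :
    ∀ E : X → ℝ, J E ≤ J Estar :=
  stmt_0_general pdata pLM hd0 hl0 hsupp J hJ Estar hEstar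
end

section
/- Let Y_1, Y_2, … be i.i.d. positive bounded random variables with mean μ, bounded below by c > 0. Define T_n = log((1/n)∑_{i=1}^n Y_i). Then the sequence E[T_n] is nondecreasing in n: E[T_n] ≤ E[T_{n+1}] for all n ≥ 1. -/
open Real MeasureTheory

/-!
The mean of `n + 1` samples is the average of its `n + 1` leave-one-out means, each of which is
a mean of `n` i.i.d. samples. By concavity of `log` (or of any concave `φ`), `φ` of the full mean
dominates the average of `φ` of the leave-one-out means, and by exchangeability each of those has
the same expectation as `φ` of an `n`-sample mean.
-/

noncomputable def sampleMean {n : ℕ} (x : Fin n → ℝ) : ℝ := (1 / n) * ∑ i, x i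

lemma Fin.sum_sum_succAbove {M : Type*} [AddCommGroup M] {n : ℕ} (x : Fin (n + 1) → M) :
    ∑ j : Fin (n + 1), ∑ i : Fin n, x (j.succAbove i) = n • ∑ i, x i := by
  have h : ∀ j, ∑ i : Fin n, x (j.succAbove i) = ∑ i, x i - x j := fun j =>
    eq_sub_of_add_eq' (Fin.sum_univ_succAbove x j).symm
  simp only [h, Finset.sum_sub_distrib, Finset.sum_const, Finset.card_univ, Fintype.card_fin,
    succ_nsmul, add_sub_cancel_right]

lemma sampleMean_mem {s : Set ℝ} (hs : Convex ℝ s) {n : ℕ} (hn : n ≠ 0) {x : Fin n → ℝ}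
    (hx : ∀ i, x i ∈ s) : sampleMean x ∈ s := by
  rw [sampleMean, Finset.mul_sum]
  refine hs.sum_mem (fun _ _ => by positivity) ?_ fun i _ => hx i
  simp [hn]

lemma sum_sampleMean_succAbove {n : ℕ} (hn : n ≠ 0) (x : Fin (n + 1) → ℝ) :
    ∑ j : Fin (n + 1), sampleMean (fun i => x (j.succAbove i)) = (n + 1) * sampleMean x := by
  simp only [sampleMean, ← Finset.mul_sum, Fin.sum_sum_succAbove, nsmul_eq_mul]
  push_cast
  field_simp

lemma ConcaveOn.sum_map_sampleMean_succAbove_le {s : Set ℝ} {φ : ℝ → ℝ}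
    (hφ : ConcaveOn ℝ s φ) {n : ℕ} (hn : n ≠ 0) {x : Fin (n + 1) → ℝ} (hx : ∀ i, x i ∈ s) :
    ∑ j : Fin (n + 1), φ (sampleMean fun i => x (j.succAbove i)) ≤ (n + 1) * φ (sampleMean x) := by
  have hw : ∑ _j : Fin (n + 1), (1 / ((n : ℝ) + 1)) = 1 := by
    simp only [one_div, Finset.sum_const, Finset.card_univ, Fintype.card_fin, nsmul_eq_mul,
      Nat.cast_add, Nat.cast_one]
    field_simp
  have := hφ.le_map_sum (t := Finset.univ) (w := fun _ => 1 / ((n : ℝ) + 1))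
    (p := fun j => sampleMean fun i => x (j.succAbove i))
    (fun _ _ => by positivity) hw fun j _ => sampleMean_mem hφ.1 hn fun i => hx _
  simp only [smul_eq_mul, ← Finset.mul_sum, sum_sampleMean_succAbove hn] at this
  field_simp at this
  exact this

section Product

variable {Ω : Type*} [MeasurableSpace Ω] (P : Measure Ω) [IsProbabilityMeasure P]

lemma measurePreserving_comp_succAbove {n : ℕ} (j : Fin (n + 1)) :
    MeasurePreserving (fun ω : Fin (n + 1) → Ω => fun i => ω (j.succAbove i))
      (Measure.pi fun _ => P) (Measure.pi fun _ => P) :=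
  measurePreserving_snd.comp (measurePreserving_piFinSuccAbove (fun _ => P) j)

lemma measurable_sampleMean_comp {n : ℕ} {Y : Ω → ℝ} (hY : Measurable Y) :
    Measurable fun ω : Fin n → Ω => sampleMean fun i => Y (ω i) := by
  unfold sampleMean; fun_prop

lemma integrable_log_of_mem_Icc {α : Type*} [MeasurableSpace α] (μ : Measure α) [IsFiniteMeasure μ]
    {h : α → ℝ} (hm : Measurable h) {c C : ℝ} (hc : 0 < c) (hb : ∀ a, h a ∈ Set.Icc c C) :
    Integrable (fun a => log (h a)) μ :=
  .of_bound (measurable_log.comp hm).aestronglyMeasurable (max |log c| |log C|) <|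
    .of_forall fun a => abs_le_max_abs_abs (log_le_log hc (hb a).1)
      (log_le_log (hc.trans_le (hb a).1) (hb a).2)

lemma integral_comp_succAbove {E : Type*} [NormedAddCommGroup E] [NormedSpace ℝ E] {n : ℕ}
    (j : Fin (n + 1)) {g : (Fin n → Ω) → E} (hg : AEStronglyMeasurable g (Measure.pi fun _ => P)) :
    ∫ ω, g (fun i => ω (j.succAbove i)) ∂(Measure.pi fun _ => P) =
      ∫ ω, g ω ∂(Measure.pi fun _ => P) := by
  rw [← (measurePreserving_comp_succAbove P j).map_eq] at hg ⊢
  exact (integral_map (measurePreserving_comp_succAbove P j).measurable.aemeasurable hg).symm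

theorem ConcaveOn.integral_map_sampleMean_le_succ {s : Set ℝ} {φ : ℝ → ℝ}
    (hφ : ConcaveOn ℝ s φ) {Y : Ω → ℝ} (hY : ∀ ω, Y ω ∈ s) {n : ℕ} (hn : n ≠ 0)
    (hint : Integrable (fun ω : Fin n → Ω => φ (sampleMean fun i => Y (ω i)))
      (Measure.pi fun _ => P))
    (hint_succ : Integrable (fun ω : Fin (n + 1) → Ω => φ (sampleMean fun i => Y (ω i)))
      (Measure.pi fun _ => P)) :
    ∫ ω : Fin n → Ω, φ (sampleMean fun i => Y (ω i)) ∂(Measure.pi fun _ => P) ≤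
      ∫ ω : Fin (n + 1) → Ω, φ (sampleMean fun i => Y (ω i)) ∂(Measure.pi fun _ => P) := by
  set g := fun ω : Fin n → Ω => φ (sampleMean fun i => Y (ω i))
  have hint_loo : ∀ j : Fin (n + 1),
      Integrable (fun ω : Fin (n + 1) → Ω => g fun i => ω (j.succAbove i)) (Measure.pi fun _ => P) :=
    fun j => (measurePreserving_comp_succAbove P j).integrable_comp_of_integrable hint
  suffices ((n : ℝ) + 1) * ∫ ω, g ω ∂(Measure.pi fun _ => P) ≤
      (n + 1) * ∫ ω : Fin (n + 1) → Ω, φ (sampleMean fun i => Y (ω i)) ∂(Measure.pi fun _ => P) from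
    le_of_mul_le_mul_left this (by positivity)
  calc ((n : ℝ) + 1) * ∫ ω, g ω ∂(Measure.pi fun _ => P)
      = ∑ j : Fin (n + 1), ∫ ω, g (fun i => ω (j.succAbove i)) ∂(Measure.pi fun _ => P) := by
        simp [integral_comp_succAbove P _ hint.aestronglyMeasurable]
    _ = ∫ ω, ∑ j : Fin (n + 1), g (fun i => ω (j.succAbove i)) ∂(Measure.pi fun _ => P) :=
        (integral_finsetSum _ fun j _ => hint_loo j).symm
    _ ≤ ∫ ω : Fin (n + 1) → Ω, (n + 1) * φ (sampleMean fun i => Y (ω i)) ∂(Measure.pi fun _ => P) :=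
        integral_mono (integrable_finsetSum _ fun j _ => hint_loo j) (hint_succ.const_mul _)
          fun ω => hφ.sum_map_sampleMean_succAbove_le hn fun i => hY (ω i)
    _ = _ := integral_const_mul _ _

end Product

theorem stmt_5_general {Ω : Type*} [MeasurableSpace Ω]
    (P : Measure Ω) [IsProbabilityMeasure P]
    (Y : Ω → ℝ) (hYm : Measurable Y)
    (c C : ℝ) (hc : 0 < c) (hbd : ∀ ω, c ≤ Y ω ∧ Y ω ≤ C) :
    ∀ n : ℕ, 1 ≤ n →
      (∫ ω : Fin n → Ω, Real.log ((1 / (n : ℝ)) * ∑ i, Y (ω i))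
          ∂(Measure.pi fun _ => P))
        ≤ ∫ ω : Fin (n + 1) → Ω,
            Real.log ((1 / ((n : ℝ) + 1)) * ∑ i, Y (ω i))
          ∂(Measure.pi fun _ => P) := by
  intro n hn
  have hint : ∀ m ≠ 0, Integrable (fun ω : Fin m → Ω => log (sampleMean fun i => Y (ω i)))
      (Measure.pi fun _ => P) := fun m hm =>
    integrable_log_of_mem_Icc _ (measurable_sampleMean_comp hYm) hc fun ω =>
      sampleMean_mem (convex_Icc c C) hm fun i => hbd (ω i)
  have := strictConcaveOn_log_Ioi.concaveOn.integral_map_sampleMean_le_succ P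
    (fun ω => hc.trans_le (hbd ω).1) (by omega) (hint n (by omega)) (hint (n + 1) (by omega))
  simpa only [sampleMean, Nat.cast_add, Nat.cast_one] using this

/-- For i.i.d. positive bounded random variables `Y_i` with `c ≤ Y ≤ C`,
`0 < c`, and mean `μ`, the expectations of `T_n = log((1/n)∑ Y_i)` are
nondecreasing in `n`. -/
theorem stmt_5 {Ω : Type*} [MeasurableSpace Ω]
    (P : Measure Ω) [IsProbabilityMeasure P]
    (Y : Ω → ℝ) (hYm : Measurable Y)
    (c C : ℝ) (hc : 0 < c) (hbd : ∀ ω, c ≤ Y ω ∧ Y ω ≤ C)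
    (μval : ℝ) (hμ : μval = ∫ ω, Y ω ∂P) :
    ∀ n : ℕ, 1 ≤ n →
      (∫ ω : Fin n → Ω, Real.log ((1 / (n : ℝ)) * ∑ i, Y (ω i))
          ∂(Measure.pi fun _ => P))
        ≤ ∫ ω : Fin (n + 1) → Ω,
            Real.log ((1 / ((n : ℝ) + 1)) * ∑ i, Y (ω i))
          ∂(Measure.pi fun _ => P) :=
  stmt_5_general P Y hYm c C hc hbd
end

section
/- Let X be a finite set, p a probability distribution on X with full support, and w : X → (0, ∞). Given n i.i.d. samples x_1, …, x_n from p, consider the resampling procedure that selects index i with probability w(x_i)/∑_{j=1}^n w(x_j) and outputs x_i. For n = 1, the output distribution equals p; and as n → ∞, for every x ∈ X, the probability that the output equals x converges to p(x)·w(x)/∑_y p(y)·w(y). -/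
/-! Write `a = ∑ p F`, `b = ∑ p G` for `F = w · 1_{x}` and `G = w`, so that the output
probability is the mean of `∑ F(xᵢ) / ∑ G(xᵢ)` over `n` i.i.d. samples. For `n = 1` the
weight `w(x₁)` cancels. In general the error `∑ F(xᵢ) / ∑ G(xᵢ) - a / b` equals
`∑ H(xᵢ) / (b ∑ G(xᵢ))` with `H = b F - a G`, which has mean zero under `p`. Since
`∑ G(xᵢ) ≥ n · min G`, the expected error is at most `𝔼 |∑ H(xᵢ)| / (n b min G)`; variances of
independent samples add, so Cauchy–Schwarz bounds this by `√(Var H / n) / (b min G) → 0`. -/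

open Finset Filter Topology

theorem abs_sum_div_sum_sub_div_le {n : ℕ} (hn : 0 < n) (u v : Fin n → ℝ) {a b m : ℝ}
    (hb : 0 < b) (hm : 0 < m) (hvm : ∀ i, m ≤ v i) :
    |(∑ i, u i) / (∑ i, v i) - a / b|
      ≤ (b * m)⁻¹ * (|∑ i, (b * u i - a * v i)| / n) := by
  have hnm : n * m ≤ ∑ i, v i := by
    simpa [mul_comm] using sum_le_sum fun i (_ : i ∈ univ) => hvm i
  have hv : 0 < ∑ i, v i := lt_of_lt_of_le (by positivity) hnm
  have hdiff : (∑ i, u i) / (∑ i, v i) - a / b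
      = (∑ i, (b * u i - a * v i)) / (b * ∑ i, v i) := by
    rw [sum_sub_distrib, ← mul_sum, ← mul_sum]
    field_simp
  rw [hdiff, abs_div, abs_of_pos (mul_pos hb hv), inv_mul_eq_div, div_div, mul_comm]
  exact div_le_div_of_nonneg_left (abs_nonneg _) (by positivity) (by nlinarith)

section IidExpect

variable {X : Type*} [Fintype X] (p : X → ℝ)

def iidExpect (n : ℕ) (f : (Fin n → X) → ℝ) : ℝ :=
  ∑ s : Fin n → X, (∏ i, p (s i)) * f s

variable {p}

theorem iidExpect_succ {n : ℕ} (f : (Fin (n + 1) → X) → ℝ) :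
    iidExpect p (n + 1) f = ∑ y, p y * iidExpect p n (fun s => f (Fin.cons y s)) := by
  simp only [iidExpect, ← Fintype.sum_equiv (Fin.consEquiv fun _ => X) _ _ (fun _ => rfl),
    Fintype.sum_prod_type, Fin.consEquiv_apply, Fin.prod_univ_succ, Fin.cons_zero,
    Fin.cons_succ, mul_sum, mul_assoc]
  rfl

theorem iidExpect_one (f : (Fin 1 → X) → ℝ) :
    iidExpect p 1 f = ∑ y, p y * f (fun _ => y) := by
  refine Fintype.sum_equiv (Equiv.funUnique (Fin 1) X) _ _ fun s => ?_
  simp only [Equiv.funUnique, Fin.prod_univ_one]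
  congr 2
  funext i
  rw [Subsingleton.elim i 0]
  rfl

theorem iidExpect_add {n : ℕ} (f g : (Fin n → X) → ℝ) :
    iidExpect p n (fun s => f s + g s) = iidExpect p n f + iidExpect p n g := by
  simp only [iidExpect, mul_add, sum_add_distrib]

theorem iidExpect_sub {n : ℕ} (f g : (Fin n → X) → ℝ) :
    iidExpect p n (fun s => f s - g s) = iidExpect p n f - iidExpect p n g := by
  simp only [iidExpect, mul_sub, sum_sub_distrib]

theorem iidExpect_const_mul {n : ℕ} (c : ℝ) (f : (Fin n → X) → ℝ) :
    iidExpect p n (fun s => c * f s) = c * iidExpect p n f := by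
  simp only [iidExpect, mul_sum, mul_left_comm]

theorem iidExpect_const (hp1 : ∑ x, p x = 1) (n : ℕ) (c : ℝ) :
    iidExpect p n (fun _ => c) = c := by
  induction n with
  | zero => simp [iidExpect]
  | succ n ih => simp only [iidExpect_succ, ih, ← sum_mul, hp1, one_mul]

theorem iidExpect_mono (hp : ∀ x, 0 ≤ p x) {n : ℕ} {f g : (Fin n → X) → ℝ}
    (hfg : ∀ s, f s ≤ g s) : iidExpect p n f ≤ iidExpect p n g :=
  sum_le_sum fun s _ => mul_le_mul_of_nonneg_left (hfg s) (prod_nonneg fun _ _ => hp _)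

theorem abs_iidExpect_le (hp : ∀ x, 0 ≤ p x) {n : ℕ} (f : (Fin n → X) → ℝ) :
    |iidExpect p n f| ≤ iidExpect p n (fun s => |f s|) := by
  refine (abs_sum_le_sum_abs _ _).trans_eq (sum_congr rfl fun s _ => ?_)
  rw [abs_mul, abs_of_nonneg (prod_nonneg fun _ _ => hp _)]

theorem iidExpect_abs_le_sqrt (hp : ∀ x, 0 ≤ p x) (hp1 : ∑ x, p x = 1) {n : ℕ}
    (f : (Fin n → X) → ℝ) :
    iidExpect p n (fun s => |f s|) ≤ √(iidExpect p n (fun s => f s ^ 2)) := by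
  refine (le_abs_self _).trans (Real.abs_le_sqrt ?_)
  have hq : ∀ s : Fin n → X, 0 ≤ ∏ i, p (s i) := fun s => prod_nonneg fun _ _ => hp _
  have hq1 : ∑ s : Fin n → X, ∏ i, p (s i) = 1 := by
    simpa [iidExpect] using iidExpect_const hp1 n 1
  have hcs := sum_sq_le_sum_mul_sum_of_sq_le_mul univ (r := fun s => (∏ i, p (s i)) * |f s|)
    (fun s _ => hq s) (fun s _ => mul_nonneg (hq s) (sq_nonneg (f s)))
    (fun s _ => by rw [mul_pow, sq_abs]; exact le_of_eq (by ring))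
  rw [hq1, one_mul] at hcs
  exact hcs

theorem iidExpect_sum_apply (hp1 : ∑ x, p x = 1) (h : X → ℝ) (n : ℕ) :
    iidExpect p n (fun s => ∑ i, h (s i)) = n * ∑ y, p y * h y := by
  induction n with
  | zero => simp [iidExpect]
  | succ n ih =>
    simp only [iidExpect_succ, Fin.sum_univ_succ, Fin.cons_zero, Fin.cons_succ,
      iidExpect_add, iidExpect_const hp1, ih, mul_add, sum_add_distrib, ← sum_mul, hp1]
    push_cast
    ring

theorem iidExpect_sq_sum_apply (hp1 : ∑ x, p x = 1) {h : X → ℝ} (hh : ∑ y, p y * h y = 0)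
    (n : ℕ) :
    iidExpect p n (fun s => (∑ i, h (s i)) ^ 2) = n * ∑ y, p y * h y ^ 2 := by
  induction n with
  | zero => simp [iidExpect]
  | succ n ih =>
    have expand : ∀ y, iidExpect p n (fun s => (h y + ∑ i, h (s i)) ^ 2)
        = h y ^ 2 + n * ∑ y, p y * h y ^ 2 := by
      intro y
      simp only [add_sq, iidExpect_add, iidExpect_const hp1, mul_assoc,
        iidExpect_const_mul, iidExpect_sum_apply hp1, hh, ih]
      ring
    simp only [iidExpect_succ, Fin.sum_univ_succ, Fin.cons_zero, Fin.cons_succ, expand,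
      mul_add, sum_add_distrib, ← sum_mul, hp1]
    push_cast
    ring

theorem iidExpect_abs_sum_div_le (hp : ∀ x, 0 ≤ p x) (hp1 : ∑ x, p x = 1) {h : X → ℝ}
    (hh : ∑ y, p y * h y = 0) (n : ℕ) :
    iidExpect p n (fun s => |∑ i, h (s i)| / n) ≤ √((∑ y, p y * h y ^ 2) / n) := by
  have hsq : iidExpect p n (fun s => ((∑ i, h (s i)) / n) ^ 2) = (∑ y, p y * h y ^ 2) / n := by
    simp only [div_pow, div_eq_inv_mul _ ((n : ℝ) ^ 2), iidExpect_const_mul,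
      iidExpect_sq_sum_apply hp1 hh]
    rcases n.eq_zero_or_pos with rfl | hn
    · simp
    · field_simp
  calc iidExpect p n (fun s => |∑ i, h (s i)| / n)
      = iidExpect p n (fun s => |(∑ i, h (s i)) / n|) := by simp only [abs_div, Nat.abs_cast]
    _ ≤ √((∑ y, p y * h y ^ 2) / n) := hsq ▸ iidExpect_abs_le_sqrt hp hp1 _

theorem tendsto_iidExpect_sum_div_sum (hp : ∀ x, 0 ≤ p x) (hp1 : ∑ x, p x = 1)
    (F G : X → ℝ) (hG : ∀ y, 0 < G y) :
    Tendsto (fun n => iidExpect p n (fun s => (∑ i, F (s i)) / ∑ i, G (s i))) atTop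
      (𝓝 ((∑ y, p y * F y) / ∑ y, p y * G y)) := by
  have : Nonempty X := by
    by_contra h
    simp [not_nonempty_iff.mp h] at hp1
  obtain ⟨z, hz⟩ := Finite.exists_min G
  set a := ∑ y, p y * F y
  set b := ∑ y, p y * G y
  have hb : 0 < b := calc
    0 < G z := hG z
    _ = ∑ y, p y * G z := by rw [← sum_mul, hp1, one_mul]
    _ ≤ b := sum_le_sum fun y _ => mul_le_mul_of_nonneg_left (hz y) (hp y)
  set H : X → ℝ := fun y => b * F y - a * G y
  have hH : ∑ y, p y * H y = 0 := by
    simp only [H, mul_sub, sum_sub_distrib, mul_left_comm (p _), ← mul_sum]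
    ring
  have hbound : ∀ n : ℕ, 0 < n →
      |iidExpect p n (fun s => (∑ i, F (s i)) / ∑ i, G (s i)) - a / b|
        ≤ (b * G z)⁻¹ * √((∑ y, p y * H y ^ 2) / n) := fun n hn => calc
    _ = |iidExpect p n (fun s => (∑ i, F (s i)) / (∑ i, G (s i)) - a / b)| := by
      rw [iidExpect_sub, iidExpect_const hp1]
    _ ≤ iidExpect p n (fun s => |(∑ i, F (s i)) / (∑ i, G (s i)) - a / b|) :=
      abs_iidExpect_le hp _
    _ ≤ iidExpect p n (fun s => (b * G z)⁻¹ * (|∑ i, H (s i)| / n)) :=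
      iidExpect_mono hp fun s => abs_sum_div_sum_sub_div_le hn _ _ hb (hG z) fun i => hz _
    _ ≤ (b * G z)⁻¹ * √((∑ y, p y * H y ^ 2) / n) := by
      rw [iidExpect_const_mul]
      exact mul_le_mul_of_nonneg_left (iidExpect_abs_sum_div_le hp hp1 hH n)
        (inv_pos.2 (mul_pos hb (hG z))).le
  have hlim : Tendsto (fun n : ℕ => (b * G z)⁻¹ * √((∑ y, p y * H y ^ 2) / n)) atTop (𝓝 0) := by
    simpa using ((tendsto_const_div_atTop_nhds_zero_nat _).sqrt).const_mul (b * G z)⁻¹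
  refine tendsto_sub_nhds_zero_iff.mp (squeeze_zero_norm' ?_ hlim)
  filter_upwards [eventually_gt_atTop 0] with n hn
  exact hbound n hn

end IidExpect

/-- Correctness of resampling (Algorithm 1): drawing `n` i.i.d. samples from
`p` and resampling index `i` with probability `w(x_i)/∑_j w(x_j)` gives a
distribution `r n` with `r 1 = p`, and `r n x → p(x)·w(x)/∑_y p(y)·w(y)`
as `n → ∞`. -/
theorem stmt_7 {X : Type*} [Fintype X] [DecidableEq X]
    (p : X → ℝ) (hp0 : ∀ x, 0 < p x) (hp1 : ∑ x, p x = 1)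
    (w : X → ℝ) (hw : ∀ x, 0 < w x)
    (r : ℕ → X → ℝ)
    (hr : r = fun n x => ∑ s : Fin n → X, (∏ i, p (s i)) *
        ((∑ i : Fin n, if s i = x then w (s i) else 0) / ∑ j : Fin n, w (s j))) :
    (∀ x, r 1 x = p x) ∧
    (∀ x, Tendsto (fun n => r n x) atTop
        (nhds (p x * w x / ∑ y, p y * w y))) := by
  subst hr
  refine ⟨fun x => ?_, fun x => ?_⟩
  · change iidExpect p 1 _ = _
    simp [iidExpect_one, ite_div, (hw _).ne']
  · have hlim := tendsto_iidExpect_sum_div_sum (fun y => (hp0 y).le) hp1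
      (fun y => if y = x then w y else 0) w hw
    simpa [iidExpect, mul_ite] using hlim
end
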